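/- (Intermediate ℓ_q bound in the proof of Theorem 3.2(ii).) Let q ∈ [1, ∞). Under the Dantzig-selector hypotheses, with h := θ₀ − θ̂, S := |T₀|, K₄ := 4/ν and ε := max_{i,j} |(V(θ₀) − J)_{ij}|, one has F_q(T₀; J) · ‖h‖_q ≤ 2 S^{1/q} ( ε ‖h‖₁ + K₄ γ ). -/

import Mathlib

open Finset

/-- ℓ₁ norm on `Fin p → ℝ`. -/
noncomputable def l1 {p : ℕ} (v : Fin p → ℝ) : ℝ := ∑ i, |v i|

/-- ℓ₁ norm of the subvector indexed by `T`. -/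
noncomputable def l1on {p : ℕ} (T : Finset (Fin p)) (v : Fin p → ℝ) : ℝ := ∑ i ∈ T, |v i|

/-- ℓ₂ norm on `Fin p → ℝ`. -/
noncomputable def l2 {p : ℕ} (v : Fin p → ℝ) : ℝ := Real.sqrt (∑ i, (v i) ^ 2)

/-- ℓ_∞ norm on `Fin p → ℝ`. -/
noncomputable def linf {p : ℕ} (v : Fin p → ℝ) : ℝ := ⨆ i, |v i|

/-- ℓ_q norm on `Fin p → ℝ` for real `q ≥ 1`. -/
noncomputable def lqnorm {p : ℕ} (q : ℝ) (v : Fin p → ℝ) : ℝ := (∑ i, |v i| ^ q) ^ (1 / q)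

/-- Quadratic form `hᵀ J h`. -/
noncomputable def quadForm {p : ℕ} (J : Matrix (Fin p) (Fin p) ℝ) (h : Fin p → ℝ) : ℝ :=
  ∑ i, ∑ j, h i * J i j * h j

/-- The cone `C_T = {h : ‖h_{Tᶜ}‖₁ ≤ ‖h_T‖₁}`. -/
def cone {p : ℕ} (T : Finset (Fin p)) : Set (Fin p → ℝ) := {h | l1on Tᶜ h ≤ l1on T h}

/-- Compatibility factor `κ(T; J)`. -/
noncomputable def kappa {p : ℕ} (T : Finset (Fin p)) (J : Matrix (Fin p) (Fin p) ℝ) : ℝ :=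
  sInf {r | ∃ h : Fin p → ℝ, h ≠ 0 ∧ h ∈ cone T ∧
    r = Real.sqrt T.card * Real.sqrt (quadForm J h) / l1on T h}

/-- Restricted eigenvalue `RE(T; J)`. -/
noncomputable def RE {p : ℕ} (T : Finset (Fin p)) (J : Matrix (Fin p) (Fin p) ℝ) : ℝ :=
  sInf {r | ∃ h : Fin p → ℝ, h ≠ 0 ∧ h ∈ cone T ∧
    r = Real.sqrt (quadForm J h) / l2 h}

/-- Weak cone invertibility factor at `q = ∞`, `F_∞(T; J)`. -/
noncomputable def Finf {p : ℕ} (T : Finset (Fin p)) (J : Matrix (Fin p) (Fin p) ℝ) : ℝ :=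
  sInf {r | ∃ h : Fin p → ℝ, h ≠ 0 ∧ h ∈ cone T ∧
    r = Real.sqrt (quadForm J h) / linf h}

/-- Weak cone invertibility factor `F_q(T; J)` for `q ∈ [1,∞)`
(with the quadratic form without square root, as in the paper's proofs). -/
noncomputable def Fq {p : ℕ} (q : ℝ) (T : Finset (Fin p)) (J : Matrix (Fin p) (Fin p) ℝ) : ℝ :=
  sInf {r | ∃ h : Fin p → ℝ, h ≠ 0 ∧ h ∈ cone T ∧
    r = (T.card : ℝ) ^ (1 / q) * quadForm J h / (l1on T h * lqnorm q h)}

/-- `g(x) = (e^{2x} - 1)/x` for `x ≠ 0`, `g(0) = 2`. -/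
noncomputable def g (x : ℝ) : ℝ := if x = 0 then 2 else (Real.exp (2 * x) - 1) / x

/-- Gradient of the log-quasi-likelihood (divided by `n`), with `b = 0`, `Δ = 1/n`:
`ψ(θ)_i = (1/(nΔ)) Σ_k z_{k,i}(e^{-2⟨θ,z_k⟩}(x_k - x_{k-1})² - Δ)`. -/
noncomputable def psiD {n p : ℕ} (x : Fin (n + 1) → ℝ) (z : Fin n → Fin p → ℝ)
    (θ : Fin p → ℝ) (i : Fin p) : ℝ :=
  (1 / ((n : ℝ) * (1 / n))) * ∑ k, z k i *
    (Real.exp (-2 * ∑ j, θ j * z k j) * (x k.succ - x k.castSucc) ^ 2 - 1 / n)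

/-- Negative Hessian (divided by `n`):
`V(θ) = (2/(nΔ)) Σ_k e^{-2⟨θ,z_k⟩}(x_k - x_{k-1})² z_k z_kᵀ`. -/
noncomputable def VD {n p : ℕ} (x : Fin (n + 1) → ℝ) (z : Fin n → Fin p → ℝ)
    (θ : Fin p → ℝ) : Matrix (Fin p) (Fin p) ℝ := fun i j =>
  (2 / ((n : ℝ) * (1 / n))) * ∑ k, Real.exp (-2 * ∑ l, θ l * z k l) *
    (x k.succ - x k.castSucc) ^ 2 * z k i * z k j

/-- `J = (2/n) Σ_k z_k z_kᵀ`. -/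
noncomputable def JD {n p : ℕ} (z : Fin n → Fin p → ℝ) : Matrix (Fin p) (Fin p) ℝ :=
  fun i j => (2 / (n : ℝ)) * ∑ k, z k i * z k j

/-- `ε = max_{i,j} |(V(θ) - J)_{ij}|`. -/
noncomputable def epsD {n p : ℕ} (x : Fin (n + 1) → ℝ) (z : Fin n → Fin p → ℝ)
    (θ : Fin p → ℝ) : ℝ :=
  ⨆ i, ⨆ j, |VD x z θ i j - JD z i j|

/-!
Write `h = θ₀ - θ̂` and `u_k = ⟨h, z_k⟩`. Since `‖θ̂‖₁ ≤ ‖θ₀‖₁` and `θ₀` vanishes off `T₀`, `h` lies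
in the cone `C_{T₀}`, so `‖h‖₁ ≤ 2 ‖h_{T₀}‖₁`. The weights `w_k(θ) = e^{-2⟨θ,z_k⟩} (x_k - x_{k-1})²`
satisfy `w_k(θ̂) = e^{2 u_k} w_k(θ₀)`, hence
`⟨h, ψ(θ̂) - ψ(θ₀)⟩ = Σ_k w_k(θ₀) (e^{2u_k} - 1) u_k = Σ_k g(u_k) w_k(θ₀) u_k²`.
As `|u_k| ≤ C ‖h‖₁ ≤ 2C ‖θ₀‖₁`, every `g(u_k)` is at least `ν`, and the two feasibility conditions give
`ν hᵀV(θ₀)h ≤ 2 ⟨h, ψ(θ̂) - ψ(θ₀)⟩ ≤ 4γ ‖h‖₁`. Passing from `V(θ₀)` to `J` costs at most `ε ‖h‖₁²`, so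
`hᵀJh ≤ 2 (ε ‖h‖₁ + K₄ γ) ‖h_{T₀}‖₁`, while the infimum `F_q` is at most its value
`S^{1/q} hᵀJh / (‖h_{T₀}‖₁ ‖h‖_q)` at `h`.
-/

section Norms

variable {p : ℕ}

lemma l1_nonneg (v : Fin p → ℝ) : 0 ≤ l1 v :=
  sum_nonneg fun _ _ => abs_nonneg _

lemma l1on_nonneg (T : Finset (Fin p)) (v : Fin p → ℝ) : 0 ≤ l1on T v :=
  sum_nonneg fun _ _ => abs_nonneg _

lemma l1_eq_zero_iff {v : Fin p → ℝ} : l1 v = 0 ↔ v = 0 := by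
  simp only [l1, sum_eq_zero_iff_of_nonneg fun i _ => abs_nonneg (v i), mem_univ, true_implies,
    abs_eq_zero, funext_iff, Pi.zero_apply]

lemma l1_sub_le (a b : Fin p → ℝ) : l1 (a - b) ≤ l1 a + l1 b := by
  rw [l1, l1, l1, ← sum_add_distrib]
  exact sum_le_sum fun i _ => abs_sub (a i) (b i)

lemma l1_eq_l1on_add_l1on_compl (T : Finset (Fin p)) (v : Fin p → ℝ) :
    l1 v = l1on T v + l1on Tᶜ v :=
  (sum_add_sum_compl T _).symm

lemma abs_sum_mul_le_l1_mul {h a : Fin p → ℝ} {c : ℝ} (ha : ∀ i, |a i| ≤ c) :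
    |∑ i, h i * a i| ≤ l1 h * c :=
  calc |∑ i, h i * a i| ≤ ∑ i, |h i| * c :=
        (abs_sum_le_sum_abs _ _).trans <| sum_le_sum fun i _ => by
          rw [abs_mul]
          exact mul_le_mul_of_nonneg_left (ha i) (abs_nonneg _)
    _ = l1 h * c := (sum_mul _ _ _).symm

lemma abs_le_linf (v : Fin p → ℝ) (i : Fin p) : |v i| ≤ linf v :=
  le_ciSup (f := fun i => |v i|) (Set.finite_range _).bddAbove i

lemma sum_mul_sub_le_l1_mul {h a b : Fin p → ℝ} {γ : ℝ} (ha : linf a ≤ γ) (hb : linf b ≤ γ) :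
    ∑ i, h i * (a i - b i) ≤ l1 h * (2 * γ) :=
  (le_abs_self _).trans <| abs_sum_mul_le_l1_mul fun i =>
    (abs_sub _ _).trans (by linarith [abs_le_linf a i, abs_le_linf b i])

lemma lqnorm_nonneg (q : ℝ) (v : Fin p → ℝ) : 0 ≤ lqnorm q v :=
  Real.rpow_nonneg (sum_nonneg fun _ _ => Real.rpow_nonneg (abs_nonneg _) _) _

lemma lqnorm_zero {q : ℝ} (hq : q ≠ 0) : lqnorm q (0 : Fin p → ℝ) = 0 := by
  simp [lqnorm, Real.zero_rpow hq, hq]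

lemma lqnorm_pos (q : ℝ) {v : Fin p → ℝ} (hv : v ≠ 0) : 0 < lqnorm q v := by
  obtain ⟨i, hi⟩ := Function.ne_iff.mp hv
  exact Real.rpow_pos_of_pos (sum_pos' (fun j _ => Real.rpow_nonneg (abs_nonneg _) _)
    ⟨i, mem_univ i, Real.rpow_pos_of_pos (abs_pos.mpr hi) q⟩) _

end Norms

section Cone

variable {p : ℕ} {T : Finset (Fin p)}

lemma sub_mem_cone_of_l1_le {θ θ' : Fin p → ℝ} (hθ : ∀ i ∉ T, θ i = 0) (hl1 : l1 θ' ≤ l1 θ) :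
    θ - θ' ∈ cone T := by
  have hθ_off : l1on Tᶜ θ = 0 := sum_eq_zero fun i hi => by simp [hθ i (mem_compl.mp hi)]
  have hoff : l1on Tᶜ (θ - θ') = l1on Tᶜ θ' :=
    sum_congr rfl fun i hi => by simp [hθ i (mem_compl.mp hi)]
  have hon : l1on T θ - l1on T θ' ≤ l1on T (θ - θ') := by
    rw [l1on, l1on, l1on, ← sum_sub_distrib]
    exact sum_le_sum fun i _ => abs_sub_abs_le_abs_sub _ _
  rw [l1_eq_l1on_add_l1on_compl T θ, l1_eq_l1on_add_l1on_compl T θ'] at hl1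
  change l1on Tᶜ (θ - θ') ≤ l1on T (θ - θ')
  linarith

lemma l1_le_two_mul_l1on_of_mem_cone {h : Fin p → ℝ} (hh : h ∈ cone T) :
    l1 h ≤ 2 * l1on T h := by
  have hcone : l1on Tᶜ h ≤ l1on T h := hh
  linarith [l1_eq_l1on_add_l1on_compl T h]

lemma l1on_pos_of_mem_cone {h : Fin p → ℝ} (hh : h ∈ cone T) (h0 : h ≠ 0) : 0 < l1on T h := by
  refine (l1on_nonneg T h).lt_of_ne fun hT => h0 (l1_eq_zero_iff.mp ?_)
  linarith [l1_le_two_mul_l1on_of_mem_cone hh, l1_nonneg h]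

end Cone

section QuadForm

variable {p : ℕ}

lemma quadForm_le_add_of_abs_sub_le {A B : Matrix (Fin p) (Fin p) ℝ} {ε : ℝ}
    (hε : ∀ i j, |A i j - B i j| ≤ ε) (h : Fin p → ℝ) :
    quadForm A h ≤ quadForm B h + ε * l1 h ^ 2 := by
  have hdiff : quadForm A h - quadForm B h = ∑ i, h i * ∑ j, h j * (A i j - B i j) := by
    simp only [quadForm, ← sum_sub_distrib, mul_sum]
    exact sum_congr rfl fun i _ => sum_congr rfl fun j _ => by ring
  have hbound := abs_sum_mul_le_l1_mul (h := h) fun i =>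
    abs_sum_mul_le_l1_mul (h := h) fun j => hε i j
  nlinarith [le_abs_self (∑ i, h i * ∑ j, h j * (A i j - B i j))]

lemma quadForm_eq_sum_sq {m : ℕ} {M : Matrix (Fin p) (Fin p) ℝ} {w : Fin m → ℝ}
    {z : Fin m → Fin p → ℝ} (hM : ∀ i j, M i j = ∑ k, w k * z k i * z k j) (h : Fin p → ℝ) :
    quadForm M h = ∑ k, w k * (∑ i, h i * z k i) ^ 2 := by
  have hk : ∀ k, w k * (∑ i, h i * z k i) ^ 2 = ∑ i, ∑ j, h i * (w k * z k i * z k j) * h j := by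
    intro k
    rw [sq, sum_mul_sum, mul_sum]
    exact sum_congr rfl fun i _ => by rw [mul_sum]; exact sum_congr rfl fun j _ => by ring
  simp only [hk, quadForm, hM, mul_sum, sum_mul]
  rw [eq_comm, sum_comm]
  exact sum_congr rfl fun i _ => by rw [sum_comm]

lemma Fq_le {q : ℝ} {T : Finset (Fin p)} {J : Matrix (Fin p) (Fin p) ℝ}
    (hJ : ∀ v, 0 ≤ quadForm J v) {h : Fin p → ℝ} (h0 : h ≠ 0) (hh : h ∈ cone T) :
    Fq q T J ≤ (T.card : ℝ) ^ (1 / q) * quadForm J h / (l1on T h * lqnorm q h) := by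
  refine csInf_le ⟨0, ?_⟩ ⟨h, h0, hh, rfl⟩
  rintro _ ⟨v, -, -, rfl⟩
  exact div_nonneg (mul_nonneg (by positivity) (hJ v))
    (mul_nonneg (l1on_nonneg _ _) (lqnorm_nonneg _ _))

lemma Fq_mul_lqnorm_le {q c : ℝ} (hq : q ≠ 0) {T : Finset (Fin p)}
    {J : Matrix (Fin p) (Fin p) ℝ} (hJ : ∀ v, 0 ≤ quadForm J v) {h : Fin p → ℝ}
    (hh : h ∈ cone T) (hc : 0 ≤ c) (hJh : quadForm J h ≤ c * l1 h) :
    Fq q T J * lqnorm q h ≤ 2 * (T.card : ℝ) ^ (1 / q) * c := by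
  rcases eq_or_ne h 0 with rfl | h0
  · rw [lqnorm_zero hq, mul_zero]
    positivity
  have hT := l1on_pos_of_mem_cone hh h0
  have hN := lqnorm_pos q h0
  have hJT : quadForm J h ≤ 2 * c * l1on T h := by
    nlinarith [l1_le_two_mul_l1on_of_mem_cone hh]
  calc Fq q T J * lqnorm q h
      ≤ (T.card : ℝ) ^ (1 / q) * quadForm J h / (l1on T h * lqnorm q h) * lqnorm q h :=
        mul_le_mul_of_nonneg_right (Fq_le hJ h0 hh) hN.le
    _ = (T.card : ℝ) ^ (1 / q) * (quadForm J h / l1on T h) := by field_simp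
    _ ≤ (T.card : ℝ) ^ (1 / q) * (2 * c) := by
        gcongr
        rwa [div_le_iff₀ hT]
    _ = 2 * (T.card : ℝ) ^ (1 / q) * c := by ring

end QuadForm

lemma g_pos (u : ℝ) : 0 < g u := by
  rw [g]
  split_ifs with hu
  · norm_num
  rcases lt_or_gt_of_ne hu with hneg | hpos
  · exact div_pos_of_neg_of_neg (by linarith [Real.exp_lt_one_iff.mpr (by linarith : 2 * u < 0)])
      hneg
  · exact div_pos (by linarith [Real.add_one_le_exp (2 * u)]) hpos

lemma g_mul_sq (u : ℝ) : g u * u ^ 2 = (Real.exp (2 * u) - 1) * u := by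
  rcases eq_or_ne u 0 with rfl | hu
  · simp
  · rw [g, if_neg hu]
    field_simp

lemma mul_sq_le_of_le_g {ν u : ℝ} (hν : ν ≤ g u) : ν * u ^ 2 ≤ (Real.exp (2 * u) - 1) * u :=
  (mul_le_mul_of_nonneg_right hν (sq_nonneg u)).trans_eq (g_mul_sq u)

section Model

variable {n p : ℕ} (x : Fin (n + 1) → ℝ) (z : Fin n → Fin p → ℝ)

lemma abs_sub_le_epsD (θ : Fin p → ℝ) (i j : Fin p) : |VD x z θ i j - JD z i j| ≤ epsD x z θ :=
  (le_ciSup (f := fun j => |VD x z θ i j - JD z i j|) (Set.finite_range _).bddAbove j).trans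
    (le_ciSup (f := fun i => ⨆ j, |VD x z θ i j - JD z i j|) (Set.finite_range _).bddAbove i)

lemma epsD_nonneg (θ : Fin p → ℝ) : 0 ≤ epsD x z θ :=
  Real.iSup_nonneg fun _ => Real.iSup_nonneg fun _ => abs_nonneg _

lemma quadForm_JD_nonneg (v : Fin p → ℝ) : 0 ≤ quadForm (JD z) v := by
  rw [quadForm_eq_sum_sq (w := fun _ => 2 / (n : ℝ)) (z := z)
    (fun i j => by simp [JD, mul_sum, mul_assoc])]
  positivity

noncomputable def incrWeight (θ : Fin p → ℝ) (k : Fin n) : ℝ :=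
  Real.exp (-2 * ∑ l, θ l * z k l) * (x k.succ - x k.castSucc) ^ 2

lemma incrWeight_nonneg (θ : Fin p → ℝ) (k : Fin n) : 0 ≤ incrWeight x z θ k := by
  unfold incrWeight
  positivity

lemma incrWeight_eq_mul_exp (θ θ' : Fin p → ℝ) (k : Fin n) :
    incrWeight x z θ' k = incrWeight x z θ k * Real.exp (2 * ∑ i, (θ - θ') i * z k i) := by
  rw [incrWeight, incrWeight, mul_right_comm, ← Real.exp_add]
  congr 2
  simp only [Pi.sub_apply, sub_mul, sum_sub_distrib]
  ring

variable {x z}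

lemma psiD_eq_sum (hn : 0 < n) (θ : Fin p → ℝ) (i : Fin p) :
    psiD x z θ i = ∑ k, z k i * (incrWeight x z θ k - 1 / n) := by
  rw [psiD, mul_one_div_cancel (by positivity : (n : ℝ) ≠ 0), div_one, one_mul]
  rfl

lemma VD_eq_sum (hn : 0 < n) (θ : Fin p → ℝ) (i j : Fin p) :
    VD x z θ i j = ∑ k, 2 * incrWeight x z θ k * z k i * z k j := by
  rw [VD, mul_one_div_cancel (by positivity : (n : ℝ) ≠ 0), div_one, mul_sum]
  exact sum_congr rfl fun k _ => by rw [incrWeight]; ring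

lemma nu_mul_quadForm_VD_le (hn : 0 < n) {ν : ℝ} {θ θ' : Fin p → ℝ}
    (hg : ∀ k, ν ≤ g (∑ i, (θ - θ') i * z k i)) :
    ν * quadForm (VD x z θ) (θ - θ') ≤
      2 * ∑ i, (θ - θ') i * (psiD x z θ' i - psiD x z θ i) := by
  have hψ : ∑ i, (θ - θ') i * (psiD x z θ' i - psiD x z θ i) =
      ∑ k, (incrWeight x z θ' k - incrWeight x z θ k) * ∑ i, (θ - θ') i * z k i := by
    simp only [psiD_eq_sum hn, ← sum_sub_distrib, mul_sum]
    rw [sum_comm]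
    exact sum_congr rfl fun k _ => sum_congr rfl fun i _ => by ring
  rw [quadForm_eq_sum_sq (VD_eq_sum hn θ), hψ, mul_sum, mul_sum]
  refine sum_le_sum fun k _ => ?_
  set u := ∑ i, (θ - θ') i * z k i
  have hw := incrWeight_nonneg x z θ k
  calc ν * (2 * incrWeight x z θ k * u ^ 2) = 2 * incrWeight x z θ k * (ν * u ^ 2) := by ring
    _ ≤ 2 * incrWeight x z θ k * ((Real.exp (2 * u) - 1) * u) :=
        mul_le_mul_of_nonneg_left (mul_sq_le_of_le_g (hg k)) (mul_nonneg zero_le_two hw)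
    _ = 2 * ((incrWeight x z θ' k - incrWeight x z θ k) * u) := by
        rw [incrWeight_eq_mul_exp x z θ θ' k]
        ring

end Model

theorem theorem_3_2_ii_intermediate_general
    (n p : ℕ) (hn : 0 < n)
    (C : ℝ) (hC : 0 < C)
    (x : Fin (n + 1) → ℝ) (z : Fin n → Fin p → ℝ)
    (hz : ∀ k i, |z k i| ≤ C)
    (θ₀ θhat : Fin p → ℝ)
    (ν : ℝ) (hν : IsLeast (g '' Set.Icc (-(2 * C * l1 θ₀)) (2 * C * l1 θ₀)) ν)
    (γ : ℝ) (hγ : 0 < γ)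
    (hfeas : linf (psiD x z θhat) ≤ γ)
    (hmin : l1 θhat ≤ l1 θ₀)
    (htrue : linf (psiD x z θ₀) ≤ γ)
    (q : ℝ) (hq : 1 ≤ q) :
    Fq q (Finset.univ.filter fun j => θ₀ j ≠ 0) (JD z) * lqnorm q (θ₀ - θhat) ≤
      2 * ((Finset.univ.filter fun j => θ₀ j ≠ 0).card : ℝ) ^ (1 / q) *
        (epsD x z θ₀ * l1 (θ₀ - θhat) + 4 / ν * γ) := by
  set h := θ₀ - θhat
  have hν0 : 0 < ν := by
    obtain ⟨u, -, rfl⟩ := hν.1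
    exact g_pos u
  have hg : ∀ k, ν ≤ g (∑ i, h i * z k i) := fun k => by
    have hu : |∑ i, h i * z k i| ≤ 2 * C * l1 θ₀ :=
      (abs_sum_mul_le_l1_mul (hz k)).trans <| by nlinarith [l1_sub_le θ₀ θhat]
    exact hν.2 ⟨_, abs_le.mp hu, rfl⟩
  have hV : quadForm (VD x z θ₀) h ≤ 4 / ν * γ * l1 h := by
    rw [show 4 / ν * γ * l1 h = 4 * γ * l1 h / ν by ring, le_div_iff₀ hν0]
    linarith [nu_mul_quadForm_VD_le (x := x) hn hg, sum_mul_sub_le_l1_mul (h := h) hfeas htrue]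
  have hJ := quadForm_le_add_of_abs_sub_le
    (fun i j => (abs_sub_comm _ _).trans_le (abs_sub_le_epsD x z θ₀ i j)) h
  refine Fq_mul_lqnorm_le (zero_lt_one.trans_le hq).ne' (quadForm_JD_nonneg z)
    (sub_mem_cone_of_l1_le (fun i hi => by simpa using hi) hmin)
    (add_nonneg (mul_nonneg (epsD_nonneg x z θ₀) (l1_nonneg h))
      (mul_nonneg (div_nonneg zero_le_four hν0.le) hγ.le)) ?_
  linarith [show (epsD x z θ₀ * l1 h + 4 / ν * γ) * l1 h
    = 4 / ν * γ * l1 h + epsD x z θ₀ * l1 h ^ 2 by ring]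

/-- Intermediate ℓ_q bound in the proof of Theorem 3.2(ii): for `q ∈ [1,∞)`, with
`h := θ₀ - θ̂`, `S := |T₀|`, `K₄ := 4/ν` and `ε := max_{i,j} |(V(θ₀) - J)_{ij}|`,
one has `F_q(T₀;J) ‖h‖_q ≤ 2 S^{1/q} (ε ‖h‖₁ + K₄ γ)`. -/
theorem theorem_3_2_ii_intermediate
    (n p : ℕ) (hn : 0 < n) (hp : 0 < p)
    (C : ℝ) (hC : 0 < C)
    (x : Fin (n + 1) → ℝ) (z : Fin n → Fin p → ℝ)
    (hz : ∀ k i, |z k i| ≤ C)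
    (θ₀ θhat : Fin p → ℝ)
    (ν : ℝ) (hν : IsLeast (g '' Set.Icc (-(2 * C * l1 θ₀)) (2 * C * l1 θ₀)) ν)
    (γ : ℝ) (hγ : 0 < γ)
    (hfeas : linf (psiD x z θhat) ≤ γ)
    (hmin : l1 θhat ≤ l1 θ₀)
    (htrue : linf (psiD x z θ₀) ≤ γ)
    (hθ₀ : θ₀ ≠ 0) (q : ℝ) (hq : 1 ≤ q) :
    Fq q (Finset.univ.filter fun j => θ₀ j ≠ 0) (JD z) * lqnorm q (θ₀ - θhat) ≤
      2 * ((Finset.univ.filter fun j => θ₀ j ≠ 0).card : ℝ) ^ (1 / q) *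
        (epsD x z θ₀ * l1 (θ₀ - θhat) + 4 / ν * γ) :=
  theorem_3_2_ii_intermediate_general n p hn C hC x z hz θ₀ θhat ν hν γ hγ hfeas hmin htrue q hq
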